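/- Let X be a nonempty compact metric space and μ a finite Borel measure on X with full support (μ(U) > 0 for every nonempty open U ⊆ X). Let u, w : X → ℝ be continuous with min u = 0, max u = l > 0 and min w = 0. For t ∈ [0,1] set h_t := min(t·l, u) + w and g(t) := ∫_X normalize(h_t) dμ. If there exists δ ∈ (0,1] such that g is strictly increasing on [0, δ], then g is strictly increasing on all of [0,1]. Likewise, if there exists δ ∈ (0,1] such that t ↦ osc(h_t) is strictly increasing on [0, δ], then t ↦ osc(h_t) is monotone nondecreasing on all of [0,1]. -/

import Mathlib

open MeasureTheory Set

/-- The (attained) minimum of `f` on a nonempty compact space. -/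
noncomputable def minF {X : Type*} (f : X → ℝ) : ℝ := sInf (Set.range f)

/-- The (attained) maximum of `f` on a nonempty compact space. -/
noncomputable def maxF {X : Type*} (f : X → ℝ) : ℝ := sSup (Set.range f)

/-- The oscillation `max f - min f`. -/
noncomputable def oscF {X : Type*} (f : X → ℝ) : ℝ := maxF f - minF f

/-- `normalize f = f - min f`. -/
noncomputable def normF {X : Type*} (f : X → ℝ) : X → ℝ := fun x => f x - minF f

/-- The minimizer set of `f`. -/
def argminF {X : Type*} (f : X → ℝ) : Set X := {x | f x = minF f}

/-- The maximizer set of `f`. -/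
def argmaxF {X : Type*} (f : X → ℝ) : Set X := {x | f x = maxF f}

/-!
Put `c = min (u + w)`. Writing `h_t = min (t l + w, u + w)` and using `min w = 0` gives
`min h_t = min (t l, c)`. If `c > 0`, then for `t l ≤ c` the minimum of `h_t` rises by exactly
`t l` while `h_t` rises by at most `t l` pointwise, so neither `∫ normalize h_t` nor `osc h_t`
exceeds its value at `t = 0` on `[0, c / l]`, contradicting strict increase near `0`. Hence
`c = 0`: every `h_t` has minimum `0`, and `h_s ≤ h_t` for `s ≤ t`, strictly on the open set
`{u > s l}`, which is nonempty for `s < 1`; full support of `μ` turns this into a strict increase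
of the integral.
-/

section Extrema

variable {X : Type*} {f g : X → ℝ}

lemma le_minF [Nonempty X] {a : ℝ} (h : ∀ x, a ≤ f x) : a ≤ minF f :=
  le_csInf (range_nonempty f) (by rintro _ ⟨x, rfl⟩; exact h x)

lemma maxF_le [Nonempty X] {a : ℝ} (h : ∀ x, f x ≤ a) : maxF f ≤ a :=
  csSup_le (range_nonempty f) (by rintro _ ⟨x, rfl⟩; exact h x)

variable [TopologicalSpace X] [CompactSpace X]

lemma minF_le (hf : Continuous f) (x : X) : minF f ≤ f x :=
  csInf_le (isCompact_range hf).bddBelow (mem_range_self x)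

lemma le_maxF (hf : Continuous f) (x : X) : f x ≤ maxF f :=
  le_csSup (isCompact_range hf).bddAbove (mem_range_self x)

variable [Nonempty X]

lemma exists_eq_minF (hf : Continuous f) : ∃ x, f x = minF f :=
  (isCompact_range hf).sInf_mem (range_nonempty f)

lemma exists_eq_maxF (hf : Continuous f) : ∃ x, f x = maxF f :=
  (isCompact_range hf).sSup_mem (range_nonempty f)

lemma maxF_mono (hg : Continuous g) (h : ∀ x, f x ≤ g x) : maxF f ≤ maxF g :=
  maxF_le fun x => (h x).trans (le_maxF hg x)

lemma minF_const_add (hf : Continuous f) (a : ℝ) : minF (fun x => a + f x) = a + minF f := by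
  obtain ⟨x, hx⟩ := exists_eq_minF hf
  refine le_antisymm ?_ (le_minF fun y => by linarith [minF_le hf y])
  exact hx ▸ minF_le (continuous_const.add hf) x

lemma minF_min (hf : Continuous f) (hg : Continuous g) :
    minF (fun x => min (f x) (g x)) = min (minF f) (minF g) := by
  refine le_antisymm ?_ (le_minF fun x => min_le_min (minF_le hf x) (minF_le hg x))
  obtain ⟨x, hx⟩ := exists_eq_minF hf
  obtain ⟨y, hy⟩ := exists_eq_minF hg
  have hfg := minF_le (hf.min hg)
  exact le_min (hx ▸ (hfg x).trans (min_le_left _ _)) (hy ▸ (hfg y).trans (min_le_right _ _))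

lemma oscF_le_oscF_of_sub_le (hg : Continuous g) (h : ∀ x, f x - g x ≤ minF f - minF g) :
    oscF f ≤ oscF g := by
  have : maxF f ≤ maxF g + (minF f - minF g) :=
    maxF_le fun x => by linarith [h x, le_maxF hg x]
  unfold oscF
  linarith

end Extrema

lemma Continuous.integrable_of_compactSpace {X : Type*} [TopologicalSpace X] [CompactSpace X]
    [MeasurableSpace X] [OpensMeasurableSpace X] {μ : Measure X} [IsFiniteMeasure μ]
    {f : X → ℝ} (hf : Continuous f) : Integrable f μ :=
  hf.integrable_of_hasCompactSupport (HasCompactSupport.of_compactSpace f)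

lemma integral_lt_integral_of_continuous {X : Type*} [TopologicalSpace X] [CompactSpace X]
    [MeasurableSpace X] [OpensMeasurableSpace X] {μ : Measure X} [IsFiniteMeasure μ]
    [μ.IsOpenPosMeasure] {f g : X → ℝ} (hf : Continuous f) (hg : Continuous g)
    (hle : ∀ x, f x ≤ g x) {x₀ : X} (hlt : f x₀ < g x₀) : ∫ x, f x ∂μ < ∫ x, g x ∂μ := by
  have hfi : Integrable f μ := hf.integrable_of_compactSpace
  have hgi : Integrable g μ := hg.integrable_of_compactSpace
  have hpos : 0 < ∫ x, (g x - f x) ∂μ :=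
    integral_pos_of_integrable_nonneg_nonzero (hg.sub hf) (hgi.sub hfi)
      (fun x => sub_nonneg.2 (hle x)) (sub_pos.2 hlt).ne'
  rw [integral_sub hgi hfi] at hpos
  linarith

lemma eq_zero_of_strictMonoOn_of_le_apply_zero {F : ℝ → ℝ} {l c δ : ℝ} (hl : 0 < l) (hc : 0 ≤ c)
    (hδ : 0 < δ) (hle : ∀ a ∈ Icc 0 c, F a ≤ F 0)
    (hF : StrictMonoOn (fun t => F (t * l)) (Icc 0 δ)) : c = 0 := by
  by_contra hne
  set t := min δ (c / l)
  have ht : 0 < t := lt_min hδ (div_pos (hc.lt_of_ne' hne) hl)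
  have htc : t * l ≤ c := (le_div_iff₀ hl).1 (min_le_right _ _)
  have hlt := hF (left_mem_Icc.2 hδ.le) ⟨ht.le, min_le_left _ _⟩ ht
  simp only [zero_mul] at hlt
  exact (hle _ ⟨by positivity, htc⟩).not_gt hlt

section TropicalPath

variable {X : Type*} {u w : X → ℝ}

/-- The paper's `h_t` is `tropicalPath u w (t * l)`. -/
def tropicalPath (u w : X → ℝ) (a : ℝ) : X → ℝ := fun x => min a (u x) + w x

lemma tropicalPath_mono {a b : ℝ} (hab : a ≤ b) (x : X) :
    tropicalPath u w a x ≤ tropicalPath u w b x :=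
  add_le_add_left (min_le_min_right _ hab) _

lemma tropicalPath_lt {a b : ℝ} (hab : a < b) {x : X} (hx : a < u x) :
    tropicalPath u w a x < tropicalPath u w b x := by
  simp only [tropicalPath, min_eq_left hx.le]
  linarith [lt_min hab hx]

lemma continuous_tropicalPath [TopologicalSpace X] (hu : Continuous u) (hw : Continuous w)
    (a : ℝ) : Continuous (tropicalPath u w a) :=
  (continuous_const.min hu).add hw

variable [TopologicalSpace X] [CompactSpace X] [Nonempty X]

lemma minF_tropicalPath (hu : Continuous u) (hw : Continuous w) (hwmin : minF w = 0) (a : ℝ) :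
    minF (tropicalPath u w a) = min a (minF (u + w)) := by
  have hpath : tropicalPath u w a = fun x => min (a + w x) ((u + w) x) := by
    funext x
    simp only [tropicalPath, Pi.add_apply, min_add_add_right]
  rw [hpath, minF_min (f := fun x => a + w x) (continuous_const.add hw) (hu.add hw),
    minF_const_add hw, hwmin, add_zero]

lemma tropicalPath_sub_zero_le (hu : Continuous u) (hw : Continuous w) (hu0 : ∀ x, 0 ≤ u x)
    (hwmin : minF w = 0) {a : ℝ} (ha : 0 ≤ a) (hac : a ≤ minF (u + w)) (x : X) :
    tropicalPath u w a x - tropicalPath u w 0 x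
      ≤ minF (tropicalPath u w a) - minF (tropicalPath u w 0) := by
  rw [minF_tropicalPath hu hw hwmin, minF_tropicalPath hu hw hwmin, min_eq_left hac,
    min_eq_left (ha.trans hac)]
  simp only [tropicalPath, min_eq_left (hu0 x)]
  linarith [min_le_left a (u x)]

lemma integral_normF_tropicalPath_le_zero [MeasurableSpace X] [OpensMeasurableSpace X]
    {μ : Measure X} [IsFiniteMeasure μ] (hu : Continuous u) (hw : Continuous w)
    (hu0 : ∀ x, 0 ≤ u x) (hwmin : minF w = 0) {a : ℝ} (ha : a ∈ Icc 0 (minF (u + w))) :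
    ∫ x, normF (tropicalPath u w a) x ∂μ ≤ ∫ x, normF (tropicalPath u w 0) x ∂μ := by
  have hnorm : ∀ b, Integrable (normF (tropicalPath u w b)) μ := fun b =>
    ((continuous_tropicalPath hu hw b).sub continuous_const).integrable_of_compactSpace
  refine integral_mono (hnorm a) (hnorm 0) fun x => ?_
  have := tropicalPath_sub_zero_le hu hw hu0 hwmin ha.1 ha.2 x
  simp only [normF]
  linarith

lemma oscF_tropicalPath_le_zero (hu : Continuous u) (hw : Continuous w) (hu0 : ∀ x, 0 ≤ u x)
    (hwmin : minF w = 0) {a : ℝ} (ha : a ∈ Icc 0 (minF (u + w))) :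
    oscF (tropicalPath u w a) ≤ oscF (tropicalPath u w 0) :=
  oscF_le_oscF_of_sub_le (continuous_tropicalPath hu hw 0)
    (tropicalPath_sub_zero_le hu hw hu0 hwmin ha.1 ha.2)

lemma strictMonoOn_integral_normF_tropicalPath [MeasurableSpace X] [OpensMeasurableSpace X]
    {μ : Measure X} [IsFiniteMeasure μ] [μ.IsOpenPosMeasure] (hu : Continuous u)
    (hw : Continuous w) (hwmin : minF w = 0) (hc : minF (u + w) = 0) :
    StrictMonoOn (fun a => ∫ x, normF (tropicalPath u w a) x ∂μ) (Icc 0 (maxF u)) := by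
  intro a ha b hb hab
  obtain ⟨x₁, hx₁⟩ := exists_eq_maxF hu
  simp only [normF, minF_tropicalPath hu hw hwmin, hc, min_eq_right ha.1,
    min_eq_right (ha.1.trans hab.le), sub_zero]
  exact integral_lt_integral_of_continuous (continuous_tropicalPath hu hw a)
    (continuous_tropicalPath hu hw b) (tropicalPath_mono hab.le)
    (tropicalPath_lt hab (hx₁ ▸ hab.trans_le hb.2))

lemma monotoneOn_oscF_tropicalPath (hu : Continuous u) (hw : Continuous w)
    (hwmin : minF w = 0) (hc : minF (u + w) = 0) :
    MonotoneOn (fun a => oscF (tropicalPath u w a)) (Ici 0) := by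
  intro a ha b hb hab
  simp only [oscF, minF_tropicalPath hu hw hwmin, hc, min_eq_right (show (0:ℝ) ≤ a from ha),
    min_eq_right (show (0:ℝ) ≤ b from hb), sub_zero]
  exact maxF_mono (continuous_tropicalPath hu hw b) (tropicalPath_mono hab)

end TropicalPath

theorem stmt_10 {X : Type*} [MetricSpace X] [CompactSpace X] [Nonempty X]
    [MeasurableSpace X] [BorelSpace X]
    (μ : Measure X) [IsFiniteMeasure μ]
    (hfull : ∀ U : Set X, IsOpen U → U.Nonempty → 0 < μ U)
    (u w : X → ℝ) (hu : Continuous u) (hw : Continuous w)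
    (l : ℝ) (hl : 0 < l) (humin : minF u = 0) (humax : maxF u = l)
    (hwmin : minF w = 0) :
    ((∃ δ ∈ Set.Ioc (0:ℝ) 1,
        StrictMonoOn
          (fun t => ∫ x, normF (fun x => min (t * l) (u x) + w x) x ∂μ)
          (Set.Icc (0:ℝ) δ)) →
      StrictMonoOn
        (fun t => ∫ x, normF (fun x => min (t * l) (u x) + w x) x ∂μ)
        (Set.Icc (0:ℝ) 1)) ∧
    ((∃ δ ∈ Set.Ioc (0:ℝ) 1,
        StrictMonoOn (fun t => oscF (fun x => min (t * l) (u x) + w x))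
          (Set.Icc (0:ℝ) δ)) →
      MonotoneOn (fun t => oscF (fun x => min (t * l) (u x) + w x))
        (Set.Icc (0:ℝ) 1)) := by
  have hu0 : ∀ x, 0 ≤ u x := fun x => humin ▸ minF_le hu x
  have hw0 : ∀ x, 0 ≤ w x := fun x => hwmin ▸ minF_le hw x
  have hc0 : 0 ≤ minF (u + w) := le_minF fun x => add_nonneg (hu0 x) (hw0 x)
  have hscale : StrictMonoOn (· * l) (Icc (0:ℝ) 1) := fun _ _ _ _ hst =>
    mul_lt_mul_of_pos_right hst hl
  have : μ.IsOpenPosMeasure := ⟨fun U hU hne => (hfull U hU hne).ne'⟩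
  refine ⟨fun ⟨δ, hδ, hF⟩ => ?_, fun ⟨δ, hδ, hF⟩ => ?_⟩
  · have hc := eq_zero_of_strictMonoOn_of_le_apply_zero
      (F := fun a => ∫ x, normF (tropicalPath u w a) x ∂μ) hl hc0 hδ.1
      (fun a ha => integral_normF_tropicalPath_le_zero hu hw hu0 hwmin ha) hF
    refine (strictMonoOn_integral_normF_tropicalPath hu hw hwmin hc).comp hscale fun t ht => ?_
    rw [humax]
    exact ⟨mul_nonneg ht.1 hl.le, mul_le_of_le_one_left hl.le ht.2⟩
  · have hc := eq_zero_of_strictMonoOn_of_le_apply_zero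
      (F := fun a => oscF (tropicalPath u w a)) hl hc0 hδ.1
      (fun a ha => oscF_tropicalPath_le_zero hu hw hu0 hwmin ha) hF
    exact (monotoneOn_oscF_tropicalPath hu hw hwmin hc).comp hscale.monotoneOn
      fun t ht => mul_nonneg ht.1 hl.le
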